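/- arXiv:2409.17103 — 4 statements merged into one kernel-verified Lean document; each statement's English description precedes it below -/
import Mathlib

section
/- Alexander's trick: let n ≥ 1 and let φ : Dⁿ → Dⁿ be a homeomorphism of the closed unit sup-norm ball with φ(x) = x for every x with ‖x‖∞ = 1. Then the map H : [0,1] × Dⁿ → Dⁿ defined by H(t,x) = t·φ(x/t) when 0 < t and ‖x‖∞ ≤ t, H(t,x) = x when ‖x‖∞ ≥ t, and H(0,x) = x, is continuous, each H(t,·) is a homeomorphism of Dⁿ fixing the boundary sphere pointwise, H(0,·) = id and H(1,·) = φ. In particular, every homeomorphism of Dⁿ that fixes the boundary pointwise is isotopic to the identity rel boundary (the mapping class group of the disc Dⁿ is trivial). -/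
open Metric Set Filter

namespace AlexanderAux

variable {n : ℕ}

/-- Retraction of `ℝⁿ` onto the closed unit ball. -/
noncomputable def r (y : Fin n → ℝ) : Fin n → ℝ := (max 1 ‖y‖)⁻¹ • y

lemma max_pos (y : Fin n → ℝ) : (0:ℝ) < max 1 ‖y‖ :=
  lt_of_lt_of_le one_pos (le_max_left _ _)

lemma r_mem (y : Fin n → ℝ) : r y ∈ Metric.closedBall (0 : Fin n → ℝ) 1 := by
  rw [mem_closedBall_zero_iff, r, norm_smul, norm_inv, Real.norm_eq_abs,
    abs_of_pos (max_pos y), inv_mul_le_iff₀ (max_pos y), mul_one]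
  exact le_max_right _ _

lemma r_eq_self {y : Fin n → ℝ} (hy : ‖y‖ ≤ 1) : r y = y := by
  rw [r, max_eq_left hy, inv_one, one_smul]

lemma r_cont : Continuous (r (n := n)) := by
  refine Continuous.smul (f := fun y : Fin n → ℝ => (max 1 ‖y‖)⁻¹) (g := id) ?_ continuous_id
  exact ((continuous_const.max continuous_norm).inv₀ fun y => (max_pos y).ne')

variable (φ : (Metric.closedBall (0 : Fin n → ℝ) 1) ≃ₜ (Metric.closedBall (0 : Fin n → ℝ) 1))

/-- Extension of `φ` to all of `ℝⁿ` via the retraction. -/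
noncomputable def Phi (y : Fin n → ℝ) : Fin n → ℝ := (φ ⟨r y, r_mem y⟩ : Fin n → ℝ)

lemma Phi_cont : Continuous (Phi φ) :=
  continuous_subtype_val.comp (φ.continuous.comp (r_cont.subtype_mk _))

lemma Phi_norm (y : Fin n → ℝ) : ‖Phi φ y‖ ≤ 1 :=
  mem_closedBall_zero_iff.mp (φ ⟨r y, r_mem y⟩).2

lemma Phi_eq {y : Fin n → ℝ} (hy : ‖y‖ ≤ 1) :
    Phi φ y = (φ ⟨y, mem_closedBall_zero_iff.mpr hy⟩ : Fin n → ℝ) := by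
  simp only [Phi]
  congr 2
  exact Subtype.ext (r_eq_self hy)

variable (hφ : ∀ x : Metric.closedBall (0 : Fin n → ℝ) 1, ‖(x : Fin n → ℝ)‖ = 1 → φ x = x)

include hφ in
lemma Phi_boundary {y : Fin n → ℝ} (hy : ‖y‖ = 1) : Phi φ y = y := by
  rw [Phi_eq φ hy.le, hφ ⟨y, mem_closedBall_zero_iff.mpr hy.le⟩ hy]

/-- The Alexander homotopy, as a raw map on `ℝ × ℝⁿ`. -/
noncomputable def G (p : ℝ × (Fin n → ℝ)) : Fin n → ℝ :=
  if ‖p.2‖ ≤ p.1 then p.1 • Phi φ (p.1⁻¹ • p.2) else p.2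

/-- The rescaled map, globally continuous. -/
noncomputable def F (p : ℝ × (Fin n → ℝ)) : Fin n → ℝ := p.1 • Phi φ (p.1⁻¹ • p.2)

lemma F_norm (p : ℝ × (Fin n → ℝ)) : ‖F φ p‖ ≤ |p.1| := by
  rw [F, norm_smul, Real.norm_eq_abs]
  calc |p.1| * ‖Phi φ (p.1⁻¹ • p.2)‖ ≤ |p.1| * 1 :=
        mul_le_mul_of_nonneg_left (Phi_norm φ _) (abs_nonneg _)
    _ = |p.1| := mul_one _

lemma F_cont : Continuous (F φ) := by
  rw [continuous_iff_continuousAt]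
  intro p
  by_cases hp : p.1 = 0
  · have hF0 : F φ p = 0 := by rw [F, hp, zero_smul]
    rw [ContinuousAt, hF0]
    apply squeeze_zero_norm (F_norm φ)
    have : Tendsto (fun q : ℝ × (Fin n → ℝ) => |q.1|) (nhds p) (nhds |p.1|) :=
      (continuous_abs.comp continuous_fst).continuousAt
    rwa [hp, abs_zero] at this
  · exact continuousAt_fst.smul (((Phi_cont φ).continuousAt).comp
      ((continuousAt_fst.inv₀ hp).smul continuousAt_snd))

include hφ in
lemma eq_case {p : ℝ × (Fin n → ℝ)} (h : ‖p.2‖ = p.1) : F φ p = p.2 := by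
  rcases eq_or_lt_of_le (h ▸ norm_nonneg p.2 : (0:ℝ) ≤ p.1) with h0 | h0
  · have : p.2 = 0 := norm_eq_zero.mp (h.trans h0.symm)
    rw [F, ← h0, zero_smul]
    exact this.symm
  · have hb : ‖p.1⁻¹ • p.2‖ = 1 := by
      rw [norm_smul, norm_inv, Real.norm_eq_abs, abs_of_pos h0, h, inv_mul_cancel₀ h0.ne']
    rw [F, Phi_boundary φ hφ hb, smul_inv_smul₀ h0.ne']

include hφ in
lemma G_cont : Continuous (G φ) := by
  apply Continuous.if_le (F_cont φ) continuous_snd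
    (continuous_norm.comp continuous_snd) continuous_fst
  exact fun p hp => eq_case φ hφ hp

include hφ in
lemma G_eq_of_le {p : ℝ × (Fin n → ℝ)} (h : p.1 ≤ ‖p.2‖) : G φ p = p.2 := by
  rw [G]
  split_ifs with hc
  · exact eq_case φ hφ (le_antisymm hc h)
  · rfl

lemma G_mem {t : ℝ} {x : Fin n → ℝ} (ht0 : 0 ≤ t) (ht1 : t ≤ 1) (hx : ‖x‖ ≤ 1) :
    G φ (t, x) ∈ Metric.closedBall (0 : Fin n → ℝ) 1 := by
  rw [mem_closedBall_zero_iff, G]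
  split_ifs with hc
  · exact le_trans (F_norm φ (t, x)) (by rwa [abs_of_nonneg ht0])
  · exact hx

lemma G_pos {t : ℝ} {x : Fin n → ℝ} (ht : 0 < t) (hc : ‖x‖ ≤ t) :
    G φ (t, x) = t • (φ ⟨t⁻¹ • x, by
      rw [mem_closedBall_zero_iff, norm_smul, norm_inv, Real.norm_eq_abs, abs_of_pos ht,
        inv_mul_le_iff₀ ht, mul_one]; exact hc⟩ : Fin n → ℝ) := by
  rw [G, if_pos hc, Phi_eq φ (by
    show ‖t⁻¹ • x‖ ≤ 1
    rw [norm_smul, norm_inv, Real.norm_eq_abs, abs_of_pos ht, inv_mul_le_iff₀ ht, mul_one]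
    exact hc)]

lemma G_inv {t : ℝ} {x : Fin n → ℝ} (ht0 : 0 ≤ t) (hx : ‖x‖ ≤ 1) :
    G φ.symm (t, G φ (t, x)) = x := by
  by_cases hc : ‖x‖ ≤ t
  · rcases eq_or_lt_of_le ht0 with h0 | h0
    · have hx0 : x = 0 := by rw [← h0] at hc; exact norm_le_zero_iff.mp hc
      subst hx0
      have h1 : G φ ((t : ℝ), (0 : Fin n → ℝ)) = 0 := by
        rw [G, if_pos (by simp [← h0]), ← h0, zero_smul]
      rw [h1, G, if_pos (by simp [← h0]), ← h0, zero_smul]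
    · have hy : t⁻¹ • x ∈ Metric.closedBall (0 : Fin n → ℝ) 1 := by
        rw [mem_closedBall_zero_iff, norm_smul, norm_inv, Real.norm_eq_abs, abs_of_pos h0,
          inv_mul_le_iff₀ h0, mul_one]; exact hc
      rw [G_pos φ h0 hc]
      have hnorm : ‖t • (φ ⟨t⁻¹ • x, hy⟩ : Fin n → ℝ)‖ ≤ t := by
        rw [norm_smul, Real.norm_eq_abs, abs_of_pos h0]
        calc t * ‖(φ ⟨t⁻¹ • x, hy⟩ : Fin n → ℝ)‖ ≤ t * 1 :=
            mul_le_mul_of_nonneg_left (mem_closedBall_zero_iff.mp (φ _).2) ht0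
          _ = t := mul_one _
      rw [G, if_pos hnorm]
      have : (t⁻¹ • t • (φ ⟨t⁻¹ • x, hy⟩ : Fin n → ℝ)) = (φ ⟨t⁻¹ • x, hy⟩ : Fin n → ℝ) :=
        inv_smul_smul₀ h0.ne' _
      rw [this, Phi_eq φ.symm (mem_closedBall_zero_iff.mp (φ _).2)]
      have : (⟨(φ ⟨t⁻¹ • x, hy⟩ : Fin n → ℝ), _⟩ :
          Metric.closedBall (0 : Fin n → ℝ) 1) = φ ⟨t⁻¹ • x, hy⟩ := rfl
      rw [this, φ.symm_apply_apply, smul_inv_smul₀ h0.ne']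
  · push_neg at hc
    have h1 : G φ (t, x) = x := by rw [G, if_neg (not_le.mpr hc)]
    rw [h1, G, if_neg (not_le.mpr hc)]

lemma G_pos' {t : ℝ} {x : Fin n → ℝ} (ht : 0 < t) (hc : ‖x‖ ≤ t)
    (y : Metric.closedBall (0 : Fin n → ℝ) 1) (hy : (y : Fin n → ℝ) = t⁻¹ • x) :
    G φ (t, x) = t • (φ y : Fin n → ℝ) := by
  rw [G_pos φ ht hc]
  congr 1
  exact congrArg _ (congrArg φ (Subtype.ext hy.symm))

lemma G_one {x : Fin n → ℝ} (hx : ‖x‖ ≤ 1) :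
    G φ (1, x) = (φ ⟨x, mem_closedBall_zero_iff.mpr hx⟩ : Fin n → ℝ) := by
  rw [G_pos' φ one_pos (by simpa using hx) ⟨x, mem_closedBall_zero_iff.mpr hx⟩
    (by rw [inv_one, one_smul]), one_smul]

end AlexanderAux

/-- **Alexander's trick.** Let `n ≥ 1` and let `φ` be a homeomorphism of the closed unit
sup-norm ball `Dⁿ = {x ∈ ℝⁿ : ‖x‖∞ ≤ 1}` fixing the boundary sphere pointwise.  Then the
map `H(t,x) = t • φ(x/t)` for `0 < t`, `‖x‖∞ ≤ t`, `H(t,x) = x` for `‖x‖∞ ≥ t` (in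
particular `H(0,·) = id`) is continuous, each `H(t,·)` is a homeomorphism of the ball
fixing the boundary pointwise, `H(0,·) = id` and `H(1,·) = φ`.  In particular every
homeomorphism of the disc fixing the boundary pointwise is isotopic to the identity rel
boundary. -/
theorem alexander_trick (n : ℕ) (hn : 1 ≤ n)
    (φ : (Metric.closedBall (0 : Fin n → ℝ) 1) ≃ₜ (Metric.closedBall (0 : Fin n → ℝ) 1))
    (hφ : ∀ x : Metric.closedBall (0 : Fin n → ℝ) 1, ‖(x : Fin n → ℝ)‖ = 1 → φ x = x) :
    ∃ H : (Set.Icc (0 : ℝ) 1) × (Metric.closedBall (0 : Fin n → ℝ) 1) →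
          (Metric.closedBall (0 : Fin n → ℝ) 1),
      Continuous H ∧
      (∀ (t : Set.Icc (0 : ℝ) 1) (x : Metric.closedBall (0 : Fin n → ℝ) 1),
        0 < (t : ℝ) → ‖(x : Fin n → ℝ)‖ ≤ (t : ℝ) →
        ∀ y : Metric.closedBall (0 : Fin n → ℝ) 1,
          (y : Fin n → ℝ) = ((t : ℝ))⁻¹ • (x : Fin n → ℝ) →
          (H (t, x) : Fin n → ℝ) = (t : ℝ) • (φ y : Fin n → ℝ)) ∧
      (∀ (t : Set.Icc (0 : ℝ) 1) (x : Metric.closedBall (0 : Fin n → ℝ) 1),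
        (t : ℝ) ≤ ‖(x : Fin n → ℝ)‖ → H (t, x) = x) ∧
      (∀ (t : Set.Icc (0 : ℝ) 1) (x : Metric.closedBall (0 : Fin n → ℝ) 1),
        (t : ℝ) = 0 → H (t, x) = x) ∧
      (∀ (t : Set.Icc (0 : ℝ) 1) (x : Metric.closedBall (0 : Fin n → ℝ) 1),
        (t : ℝ) = 1 → H (t, x) = φ x) ∧
      (∀ t : Set.Icc (0 : ℝ) 1,
        ∃ ψ : (Metric.closedBall (0 : Fin n → ℝ) 1) ≃ₜ (Metric.closedBall (0 : Fin n → ℝ) 1),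
          (∀ x, ψ x = H (t, x)) ∧
          (∀ x : Metric.closedBall (0 : Fin n → ℝ) 1, ‖(x : Fin n → ℝ)‖ = 1 → ψ x = x)) := by
  classical
  have hφs : ∀ x : Metric.closedBall (0 : Fin n → ℝ) 1,
      ‖(x : Fin n → ℝ)‖ = 1 → φ.symm x = x := by
    intro x hx
    have h := congrArg φ.symm (hφ x hx)
    rw [φ.symm_apply_apply] at h
    exact h.symm
  refine ⟨fun p => ⟨AlexanderAux.G φ ((p.1 : ℝ), (p.2 : Fin n → ℝ)),
      AlexanderAux.G_mem φ p.1.2.1 p.1.2.2 (mem_closedBall_zero_iff.mp p.2.2)⟩,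
    ?_, ?_, ?_, ?_, ?_, ?_⟩
  · exact ((AlexanderAux.G_cont φ hφ).comp
      ((continuous_subtype_val.comp continuous_fst).prodMk
        (continuous_subtype_val.comp continuous_snd))).subtype_mk _
  · intro t x ht hxt y hy
    exact AlexanderAux.G_pos' φ ht hxt y hy
  · intro t x h
    exact Subtype.ext (AlexanderAux.G_eq_of_le φ hφ h)
  · intro t x ht
    exact Subtype.ext (AlexanderAux.G_eq_of_le φ hφ
      (by show (t : ℝ) ≤ ‖(x : Fin n → ℝ)‖; rw [ht]; exact norm_nonneg _))
  · intro t x ht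
    refine Subtype.ext ?_
    show AlexanderAux.G φ ((t : ℝ), (x : Fin n → ℝ)) = _
    rw [ht, AlexanderAux.G_one φ (mem_closedBall_zero_iff.mp x.2)]
  · intro t
    refine ⟨⟨⟨fun x => ⟨AlexanderAux.G φ ((t : ℝ), (x : Fin n → ℝ)),
        AlexanderAux.G_mem φ t.2.1 t.2.2 (mem_closedBall_zero_iff.mp x.2)⟩,
      fun x => ⟨AlexanderAux.G φ.symm ((t : ℝ), (x : Fin n → ℝ)),
        AlexanderAux.G_mem φ.symm t.2.1 t.2.2 (mem_closedBall_zero_iff.mp x.2)⟩,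
      fun x => Subtype.ext (AlexanderAux.G_inv φ t.2.1 (mem_closedBall_zero_iff.mp x.2)),
      fun x => Subtype.ext (by
        show AlexanderAux.G φ ((t : ℝ), AlexanderAux.G φ.symm ((t : ℝ), (x : Fin n → ℝ))) = x
        have h := AlexanderAux.G_inv φ.symm t.2.1 (mem_closedBall_zero_iff.mp x.2)
        rwa [Homeomorph.symm_symm] at h)⟩,
      ((AlexanderAux.G_cont φ hφ).comp
        (continuous_const.prodMk continuous_subtype_val)).subtype_mk _,
      ((AlexanderAux.G_cont φ.symm hφs).comp
        (continuous_const.prodMk continuous_subtype_val)).subtype_mk _⟩,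
      fun x => rfl,
      fun x hx => Subtype.ext (AlexanderAux.G_eq_of_le φ hφ
        (by show (t : ℝ) ≤ ‖(x : Fin n → ℝ)‖; rw [hx]; exact t.2.2))⟩
end

section
/- Let K be a field, A an associative unital K-algebra, and τ : A → K a tracial nondegenerate linear functional. Let e ∈ A be a nonzero idempotent (e·e = e) such that for every x ∈ A there exists a scalar c ∈ K with e·x·e = c·e. Then τ(e) ≠ 0. -/
/-- **A minimal idempotent has nonzero trace.** Let `K` be a field, `A` an associative
unital `K`-algebra, and `τ : A → K` a tracial nondegenerate linear functional.  Let
`e ∈ A` be a nonzero idempotent such that for every `x ∈ A` there is a scalar `c ∈ K`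
with `e·x·e = c·e`.  Then `τ(e) ≠ 0`. -/
theorem trace_of_minimal_idempotent_ne_zero
    (K : Type*) [Field K] (A : Type*) [Ring A] [Algebra K A]
    (τ : A →ₗ[K] K)
    (htr : ∀ x y : A, τ (x * y) = τ (y * x))
    (hnd : ∀ x : A, (∀ a : A, τ (x * a) = 0) → x = 0)
    (e : A) (he : e * e = e) (hene : e ≠ 0)
    (hmin : ∀ x : A, ∃ c : K, e * x * e = c • e) :
    τ e ≠ 0 := by
  intro hτ
  apply hene
  apply hnd
  intro a
  obtain ⟨c, hc⟩ := hmin a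
  have : τ (e * a) = τ (e * a * e) := by
    conv_lhs => rw [← he, mul_assoc, htr]
  rw [this, hc, map_smul, hτ, smul_zero]
end

section
/- For every integer m ≥ 1, the real symmetric matrix G_m, indexed by pairs of set partitions of {1,…,m} and defined by G_m(P,Q) = 2^{c(P⊔Q)} · (√2)^{m − b(P) − b(Q)}, is positive semidefinite and has rank exactly 2^{m−1}. -/
open Matrix

lemma aux_card_fun_true {α : Type*} [Fintype α] [DecidableEq α] (a : α) :
    Fintype.card {g : α → Bool // g a = true} = 2 ^ (Fintype.card α - 1) := by
  classical
  have e : {g : α → Bool // g a = true} ≃ ({i : α // i ≠ a} → Bool) :=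
    { toFun := fun g j => g.1 j.1
      invFun := fun h => ⟨fun i => if hi : i = a then true else h ⟨i, hi⟩, by simp⟩
      left_inv := by
        rintro ⟨g, hg⟩
        ext i
        by_cases hi : i = a <;> simp [hi, hg]
      right_inv := by
        intro h; ext j; simp [j.2] }
  have hcard : Fintype.card {i : α // i ≠ a} = Fintype.card α - 1 := by
    have := Fintype.card_subtype_compl (fun i : α => i = a)
    simp only [this, Fintype.card_subtype_eq]
  rw [Fintype.card_congr e, Fintype.card_fun, hcard, Fintype.card_bool]

lemma aux_card_le_ker {m : ℕ} (R : Setoid (Fin m)) (i0 : Fin m) :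
    Nat.card {ε : Fin m → Bool // ε i0 = true ∧ R ≤ Setoid.ker ε} =
      2 ^ (Nat.card (Quotient R) - 1) := by
  classical
  have : Fintype (Quotient R) := Fintype.ofFinite _
  have e : {ε : Fin m → Bool // ε i0 = true ∧ R ≤ Setoid.ker ε} ≃
      {g : Quotient R → Bool // g (Quotient.mk R i0) = true} :=
    { toFun := fun ε => ⟨Quotient.lift ε.1
        (fun a b h => Setoid.ker_def.mp (Setoid.le_def.mp ε.2.2 h)), ε.2.1⟩
      invFun := fun g => ⟨fun i => g.1 (Quotient.mk R i), g.2,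
        Setoid.le_def.mpr fun h => Setoid.ker_def.mpr
          (congrArg g.1 (Quotient.sound h))⟩
      left_inv := by rintro ⟨ε, h1, h2⟩; rfl
      right_inv := by
        rintro ⟨g, hg⟩
        ext q
        induction q using Quotient.ind
        rfl }
  rw [Nat.card_congr e, Nat.card_eq_fintype_card, aux_card_fun_true,
    Nat.card_eq_fintype_card]

lemma aux_ker_le_ker {m : ℕ} {i0 : Fin m} {x y : Fin m → Bool}
    (hx : x i0 = true) (hy : y i0 = true) :
    Setoid.ker x ≤ Setoid.ker y ↔ (y = x ∨ y = fun _ => true) := by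
  constructor
  · intro h
    by_cases hall : ∀ j, y j = true
    · exact Or.inr (funext hall)
    · push_neg at hall
      obtain ⟨j, hj⟩ := hall
      have hj' : y j = false := by simpa using hj
      left
      funext i
      cases hxi : x i
      · -- need y i = false
        cases hxj : x j
        · have : y i = y j := Setoid.ker_def.mp (Setoid.le_def.mp h
            (Setoid.ker_def.mpr (hxi.trans hxj.symm)))
          rw [this, hj']
        · have : y j = y i0 := Setoid.ker_def.mp (Setoid.le_def.mp h
            (Setoid.ker_def.mpr (hxj.trans hx.symm)))
          rw [hj'] at this
          rw [hy] at this
          exact absurd this (by simp)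
      · have : y i = y i0 := Setoid.ker_def.mp (Setoid.le_def.mp h
          (Setoid.ker_def.mpr (hxi.trans hx.symm)))
        rw [this, hy]
  · rintro (rfl | rfl)
    · exact le_refl _
    · exact Setoid.le_def.mpr fun _ => Setoid.ker_def.mpr rfl

lemma aux_scalar (m bP bQ cJ : ℕ) (hc : 1 ≤ cJ) :
    ((2:ℝ) ^ (((m:ℝ) - 2*bP + 2)/4)) * ((2:ℝ) ^ (((m:ℝ) - 2*bQ + 2)/4)) *
      (2:ℝ) ^ (cJ - 1) =
    2 ^ cJ * Real.sqrt 2 ^ ((m : ℤ) - (bP : ℤ) - (bQ : ℤ)) := by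
  have h2 : (0:ℝ) < 2 := two_pos
  set k : ℤ := (m : ℤ) - bP - bQ with hk
  have h1 : Real.sqrt 2 ^ k = (2:ℝ) ^ ((1/2 : ℝ) * (k:ℝ)) := by
    rw [Real.sqrt_eq_rpow, ← Real.rpow_intCast ((2:ℝ) ^ (1/2:ℝ)) k,
      ← Real.rpow_mul h2.le]
  have h3 : (2:ℝ) ^ cJ = (2:ℝ) ^ ((cJ : ℝ)) := (Real.rpow_natCast 2 cJ).symm
  have h4 : (2:ℝ) ^ (cJ - 1) = (2:ℝ) ^ (((cJ:ℝ) - 1)) := by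
    rw [← Real.rpow_natCast 2 (cJ-1)]
    congr 1
    push_cast [Nat.cast_sub hc]
    ring
  rw [h1, h3, h4, ← Real.rpow_add h2, ← Real.rpow_add h2, ← Real.rpow_add h2]
  congr 1
  rw [hk]
  push_cast
  ring

noncomputable instance setoidFintype (m : ℕ) : Fintype (Setoid (Fin m)) := by
  classical
  have hinj : Function.Injective
      (fun s : Setoid (Fin m) => (fun a b => s.r a b : Fin m → Fin m → Prop)) := by
    intro s t h
    cases s
    cases t
    simp only at h
    congr 1
  have : Finite (Setoid (Fin m)) := Finite.of_injective _ hinj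
  exact Fintype.ofFinite _

/-- **The Ising Gram matrix on set partitions is positive semidefinite of rank
`2^(m−1)`.** For `m ≥ 1`, the real symmetric matrix `G_m`, indexed by set partitions
(equivalence relations) `P, Q` of `{1,…,m}` and defined by
`G_m(P,Q) = 2^{c(P⊔Q)} · (√2)^{m − b(P) − b(Q)}`, where `b(P)` is the number of blocks
of `P` and `c(P⊔Q)` the number of blocks of the join (least common coarsening), is
positive semidefinite and has rank exactly `2^(m−1)`. -/
theorem ising_gram_matrix_posSemidef_and_rank (m : ℕ) (hm : 1 ≤ m)
    (G : Matrix (Setoid (Fin m)) (Setoid (Fin m)) ℝ)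
    (hG : ∀ P Q : Setoid (Fin m),
      G P Q = 2 ^ (Nat.card (Quotient (P ⊔ Q))) *
        Real.sqrt 2 ^
          ((m : ℤ) - (Nat.card (Quotient P) : ℤ) - (Nat.card (Quotient Q) : ℤ))) :
    G.PosSemidef ∧ G.rank = 2 ^ (m - 1) := by
  classical
  set i0 : Fin m := ⟨0, hm⟩ with hi0
  set T := {ε : Fin m → Bool // ε i0 = true} with hT
  set c : Setoid (Fin m) → ℝ := fun P =>
    (2 : ℝ) ^ (((m : ℝ) - 2 * (Nat.card (Quotient P)) + 2) / 4) with hc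
  have hc_pos : ∀ P, 0 < c P := fun P => Real.rpow_pos_of_pos two_pos _
  set B : Matrix T (Setoid (Fin m)) ℝ :=
    Matrix.of (fun x P => c P * (if P ≤ Setoid.ker x.1 then 1 else 0)) with hB
  have hBapp : ∀ (x : T) (P : Setoid (Fin m)),
      B x P = c P * (if P ≤ Setoid.ker x.1 then 1 else 0) := fun _ _ => rfl
  -- G = Bᴴ * B
  have hGB : G = Bᴴ * B := by
    ext P Q
    rw [hG, Matrix.mul_apply]
    have hterm : ∀ x : T, Bᴴ P x * B x Q =
        c P * c Q * (if P ⊔ Q ≤ Setoid.ker x.1 then 1 else 0) := by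
      intro x
      rw [Matrix.conjTranspose_apply, star_trivial, hBapp, hBapp]
      by_cases h1 : P ≤ Setoid.ker x.1 <;> by_cases h2 : Q ≤ Setoid.ker x.1 <;>
        simp [h1, h2, sup_le_iff]
    rw [Finset.sum_congr rfl (fun x _ => hterm x), ← Finset.mul_sum]
    have hsum : ∑ x : T, (if P ⊔ Q ≤ Setoid.ker x.1 then (1:ℝ) else 0) =
        ((2 ^ (Nat.card (Quotient (P ⊔ Q)) - 1) : ℕ) : ℝ) := by
      rw [Finset.sum_boole]
      congr 1
      have h1 : (Finset.univ.filter fun x : T => P ⊔ Q ≤ Setoid.ker x.1).card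
          = Fintype.card {ε : Fin m → Bool // ε i0 = true ∧ P ⊔ Q ≤ Setoid.ker ε} := by
        rw [← Fintype.card_subtype]
        exact Fintype.card_congr (Equiv.subtypeSubtypeEquivSubtypeInter
          (fun ε : Fin m → Bool => ε i0 = true)
          (fun ε : Fin m → Bool => P ⊔ Q ≤ Setoid.ker ε))
      rw [h1, ← Nat.card_eq_fintype_card, aux_card_le_ker]
    rw [hsum]
    have hcJ : 1 ≤ Nat.card (Quotient (P ⊔ Q)) := by
      have : Nonempty (Quotient (P ⊔ Q)) := ⟨Quotient.mk _ i0⟩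
      exact Nat.one_le_iff_ne_zero.mpr (Nat.card_ne_zero.mpr ⟨this, Quotient.finite _⟩)
    push_cast
    rw [← aux_scalar m (Nat.card (Quotient P)) (Nat.card (Quotient Q))
      (Nat.card (Quotient (P ⊔ Q))) hcJ]
  have hPSD : G.PosSemidef := hGB ▸ Matrix.posSemidef_conjTranspose_mul_self B
  refine ⟨hPSD, ?_⟩
  -- rank
  set t1 : T := ⟨fun _ => true, rfl⟩ with ht1
  have hcol : ∀ x : T, (fun y : T => if y = x ∨ y = t1 then (1:ℝ) else 0) ∈
      LinearMap.range B.mulVecLin := by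
    intro x
    refine ⟨Pi.single (Setoid.ker x.1) (c (Setoid.ker x.1))⁻¹, ?_⟩
    rw [Matrix.mulVecLin_apply, Matrix.mulVec_single]
    funext y
    change B y (Setoid.ker x.1) * (c (Setoid.ker x.1))⁻¹ = _
    rw [hBapp]
    by_cases h : y = x ∨ y = t1
    · have h' : y.1 = x.1 ∨ y.1 = fun _ => true := by
        rcases h with rfl | rfl
        · exact Or.inl rfl
        · exact Or.inr rfl
      rw [if_pos ((aux_ker_le_ker x.2 y.2).mpr h'), if_pos h, mul_one,
        mul_inv_cancel₀ (hc_pos _).ne']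
    · have h' : ¬ (Setoid.ker x.1 ≤ Setoid.ker y.1) := fun hk => h (by
        rcases (aux_ker_le_ker x.2 y.2).mp hk with h1 | h1
        · exact Or.inl (Subtype.ext h1)
        · exact Or.inr (Subtype.ext h1))
      rw [if_neg h', if_neg h, mul_zero, zero_mul]
  have ht1mem : Pi.single t1 (1:ℝ) ∈ LinearMap.range B.mulVecLin := by
    have h := hcol t1
    have heq : (fun y : T => if y = t1 ∨ y = t1 then (1:ℝ) else 0) = Pi.single t1 1 := by
      funext y
      simp [Pi.single_apply]
    rwa [heq] at h
  have hsingle : ∀ x : T, Pi.single x (1:ℝ) ∈ LinearMap.range B.mulVecLin := by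
    intro x
    by_cases hx : x = t1
    · subst hx; exact ht1mem
    · have heq : Pi.single x (1:ℝ) =
          (fun y : T => if y = x ∨ y = t1 then (1:ℝ) else 0) - Pi.single t1 1 := by
        funext y
        simp only [Pi.sub_apply, Pi.single_apply]
        by_cases hyx : y = x
        · subst hyx
          simp [hx, Ne.symm hx]
        · by_cases hyt : y = t1 <;> simp [hyx, hyt, Ne.symm hx]
      rw [heq]
      exact sub_mem (hcol x) ht1mem
  have htop : LinearMap.range B.mulVecLin = ⊤ := by
    rw [eq_top_iff, ← (Pi.basisFun ℝ T).span_eq, Submodule.span_le]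
    rintro _ ⟨x, rfl⟩
    rw [Pi.basisFun_apply]
    exact hsingle x
  have hcardT : Fintype.card T = 2 ^ (m - 1) := by
    rw [show (2:ℕ) ^ (m-1) = 2 ^ (Fintype.card (Fin m) - 1) by rw [Fintype.card_fin],
      ← aux_card_fun_true (α := Fin m) i0]
  rw [hGB, Matrix.rank_conjTranspose_mul_self, Matrix.rank, htop, finrank_top,
    Module.finrank_pi, hcardT]
end

section
/- For m = 3, with the five set partitions of {1,2,3} ordered as {123}, {12|3}, {13|2}, {23|1}, {1|2|3}, the matrix G_3 equals [[2√2, 2, 2, 2, √2], [2, 2√2, √2, √2, 2], [2, √2, 2√2, √2, 2], [2, √2, √2, 2√2, 2], [√2, 2, 2, 2, 2√2]]. This matrix is positive semidefinite of rank 4, and its kernel is one-dimensional, spanned by the vector (√2, −1, −1, −1, √2). -/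
/-- The join of the kernels of two functions `Fin 3 → Fin 2` is `⊤` provided any two points
can be connected by a two-step path using the two kernels. -/
lemma ker_sup_ker_eq_top (f g : Fin 3 → Fin 2)
    (hfg : ∀ x y : Fin 3, ∃ m, (f x = f m ∧ g m = g y) ∨ (g x = g m ∧ f m = f y)) :
    Setoid.ker f ⊔ Setoid.ker g = ⊤ := by
  rw [Setoid.eq_top_iff]
  have h1 : ∀ x y : Fin 3, f x = f y → (Setoid.ker f ⊔ Setoid.ker g) x y :=
    fun x y h => le_sup_left (α := Setoid (Fin 3)) h
  have h2 : ∀ x y : Fin 3, g x = g y → (Setoid.ker f ⊔ Setoid.ker g) x y :=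
    fun x y h => le_sup_right (α := Setoid (Fin 3)) h
  intro x y
  obtain ⟨m, ⟨ha, hb⟩ | ⟨ha, hb⟩⟩ := hfg x y
  · exact Setoid.trans' _ (h1 x m ha) (h2 m y hb)
  · exact Setoid.trans' _ (h2 x m ha) (h1 m y hb)

lemma card_top3 : Nat.card (Quotient (⊤ : Setoid (Fin 3))) = 1 := by
  have h1 : Subsingleton (Quotient (⊤ : Setoid (Fin 3))) := by
    constructor; rintro ⟨a⟩ ⟨b⟩; exact Quotient.sound trivial
  have h2 : Nonempty (Quotient (⊤ : Setoid (Fin 3))) := ⟨⟦0⟧⟩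
  exact Nat.card_eq_one_iff_unique.2 ⟨h1, h2⟩

lemma card_bot3 : Nat.card (Quotient (⊥ : Setoid (Fin 3))) = 3 := by
  have e : Quotient (⊥ : Setoid (Fin 3)) ≃ Fin 3 := by
    refine (Equiv.ofBijective (Quotient.mk _) ⟨?_, Quot.exists_rep⟩).symm
    intro a b h
    exact Quotient.exact h
  rw [Nat.card_congr e]; simp

lemma card_ker3 (f : Fin 3 → Fin 2) (hf : Function.Surjective f) :
    Nat.card (Quotient (Setoid.ker f)) = 2 := by
  rw [Nat.card_congr (Setoid.quotientKerEquivOfSurjective f hf)]; simp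

set_option maxHeartbeats 2000000 in
/-- **The key relation with three boundary circles.** For `m = 3`, with the five set
partitions of `{1,2,3}` ordered as `{123}, {12|3}, {13|2}, {23|1}, {1|2|3}`, the Gram
matrix `G₃(P,Q) = 2^{c(P⊔Q)}·(√2)^{3−b(P)−b(Q)}` equals the explicit `5×5` matrix below;
it is positive semidefinite of rank `4`, and its kernel is one-dimensional, spanned by
the vector `(√2, −1, −1, −1, √2)`. -/
theorem ising_gram_matrix_three_circles
    (G : Matrix (Setoid (Fin 3)) (Setoid (Fin 3)) ℝ)
    (hG : ∀ P Q : Setoid (Fin 3),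
      G P Q = 2 ^ (Nat.card (Quotient (P ⊔ Q))) *
        Real.sqrt 2 ^
          ((3 : ℤ) - (Nat.card (Quotient P) : ℤ) - (Nat.card (Quotient Q) : ℤ)))
    (e : Fin 5 → Setoid (Fin 3))
    (he : e = ![⊤,
      Setoid.ker (![0, 0, 1] : Fin 3 → Fin 2),
      Setoid.ker (![0, 1, 0] : Fin 3 → Fin 2),
      Setoid.ker (![0, 1, 1] : Fin 3 → Fin 2), ⊥])
    (M : Matrix (Fin 5) (Fin 5) ℝ)
    (hM : M = Matrix.of fun i j => G (e i) (e j)) :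
    M = !![2 * Real.sqrt 2, 2, 2, 2, Real.sqrt 2;
           2, 2 * Real.sqrt 2, Real.sqrt 2, Real.sqrt 2, 2;
           2, Real.sqrt 2, 2 * Real.sqrt 2, Real.sqrt 2, 2;
           2, Real.sqrt 2, Real.sqrt 2, 2 * Real.sqrt 2, 2;
           Real.sqrt 2, 2, 2, 2, 2 * Real.sqrt 2] ∧
    M.PosSemidef ∧ M.rank = 4 ∧
    LinearMap.ker M.mulVecLin =
      Submodule.span ℝ {![Real.sqrt 2, -1, -1, -1, Real.sqrt 2]} := by
  set s := Real.sqrt 2 with hsdef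
  have hs0 : (0:ℝ) < s := Real.sqrt_pos.2 (by norm_num)
  have hs0' : s ≠ 0 := ne_of_gt hs0
  have hs2 : s ^ 2 = 2 := Real.sq_sqrt (by norm_num)
  have hs3 : s ^ 3 = 2 * s := by rw [pow_succ, hs2, mul_comm]
  -- join computations
  have j12 : Setoid.ker (![0,0,1] : Fin 3 → Fin 2) ⊔ Setoid.ker (![0,1,0] : Fin 3 → Fin 2) = ⊤ :=
    ker_sup_ker_eq_top _ _ (by decide)
  have j13 : Setoid.ker (![0,0,1] : Fin 3 → Fin 2) ⊔ Setoid.ker (![0,1,1] : Fin 3 → Fin 2) = ⊤ :=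
    ker_sup_ker_eq_top _ _ (by decide)
  have j23 : Setoid.ker (![0,1,0] : Fin 3 → Fin 2) ⊔ Setoid.ker (![0,1,1] : Fin 3 → Fin 2) = ⊤ :=
    ker_sup_ker_eq_top _ _ (by decide)
  have j21 := (sup_comm _ _).trans j12
  have j31 := (sup_comm _ _).trans j13
  have j32 := (sup_comm _ _).trans j23
  -- block counts
  have c1 : Nat.card (Quotient (Setoid.ker (![0,0,1] : Fin 3 → Fin 2))) = 2 :=
    card_ker3 _ (by decide)
  have c2 : Nat.card (Quotient (Setoid.ker (![0,1,0] : Fin 3 → Fin 2))) = 2 :=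
    card_ker3 _ (by decide)
  have c3 : Nat.card (Quotient (Setoid.ker (![0,1,1] : Fin 3 → Fin 2))) = 2 :=
    card_ker3 _ (by decide)
  -- numeric values of the entries
  have hA : (2:ℝ) ^ (1:ℕ) * s ^ ((3:ℤ) - 1 - 1) = 2 * s := by norm_num
  have hB : (2:ℝ) ^ (1:ℕ) * s ^ ((3:ℤ) - 1 - 2) = 2 := by norm_num
  have hB' : (2:ℝ) ^ (1:ℕ) * s ^ ((3:ℤ) - 2 - 1) = 2 := by norm_num
  have hC : (2:ℝ) ^ (1:ℕ) * s ^ ((3:ℤ) - 1 - 3) = s := by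
    rw [show (3:ℤ) - 1 - 3 = -1 by norm_num, zpow_neg_one, pow_one]
    field_simp; linarith [hs2]
  have hC' : (2:ℝ) ^ (1:ℕ) * s ^ ((3:ℤ) - 3 - 1) = s := by
    rw [show (3:ℤ) - 3 - 1 = -1 by norm_num, zpow_neg_one, pow_one]
    field_simp; linarith [hs2]
  have hCk : (2:ℝ) ^ (1:ℕ) * s ^ ((3:ℤ) - 2 - 2) = s := by
    rw [show (3:ℤ) - 2 - 2 = -1 by norm_num, zpow_neg_one, pow_one]
    field_simp; linarith [hs2]
  have hD : (2:ℝ) ^ (2:ℕ) * s ^ ((3:ℤ) - 2 - 2) = 2 * s := by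
    rw [show (3:ℤ) - 2 - 2 = -1 by norm_num, zpow_neg_one]
    field_simp; linarith [hs2]
  have hE : (2:ℝ) ^ (2:ℕ) * s ^ ((3:ℤ) - 2 - 3) = 2 := by
    rw [show (3:ℤ) - 2 - 3 = -2 by norm_num, zpow_neg, zpow_two]
    field_simp; linarith [hs2]
  have hE' : (2:ℝ) ^ (2:ℕ) * s ^ ((3:ℤ) - 3 - 2) = 2 := by
    rw [show (3:ℤ) - 3 - 2 = -2 by norm_num, zpow_neg, zpow_two]
    field_simp; linarith [hs2]
  have hF : (2:ℝ) ^ (3:ℕ) * s ^ ((3:ℤ) - 3 - 3) = 2 * s := by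
    rw [show (3:ℤ) - 3 - 3 = -3 by norm_num, zpow_neg, show ((3:ℤ)) = ((3:ℕ):ℤ) by norm_num,
      zpow_natCast]
    rw [hs3]; field_simp; linarith [hs2]
  subst hM he
  -- Part 1: the explicit form of the matrix
  have hMN : (Matrix.of fun i j =>
        G (![⊤, Setoid.ker (![0, 0, 1] : Fin 3 → Fin 2),
          Setoid.ker (![0, 1, 0] : Fin 3 → Fin 2),
          Setoid.ker (![0, 1, 1] : Fin 3 → Fin 2), ⊥] i)
          (![⊤, Setoid.ker (![0, 0, 1] : Fin 3 → Fin 2),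
          Setoid.ker (![0, 1, 0] : Fin 3 → Fin 2),
          Setoid.ker (![0, 1, 1] : Fin 3 → Fin 2), ⊥] j)) =
      !![2 * s, 2, 2, 2, s;
         2, 2 * s, s, s, 2;
         2, s, 2 * s, s, 2;
         2, s, s, 2 * s, 2;
         s, 2, 2, 2, 2 * s] := by
    ext i j
    fin_cases i <;> fin_cases j <;>
      simp only [Matrix.of_apply, Fin.isValue, Matrix.cons_val_zero, Matrix.cons_val_one,
        Matrix.head_cons, Matrix.cons_val_succ, Fin.mk_zero, Fin.mk_one,
        show (⟨2, by norm_num⟩ : Fin 5) = 2 from rfl, show (⟨3, by norm_num⟩ : Fin 5) = 3 from rfl,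
        show (⟨4, by norm_num⟩ : Fin 5) = 4 from rfl, hG, j12, j13, j23, j21, j31, j32,
        top_sup_eq, sup_top_eq, bot_sup_eq, sup_bot_eq,
        sup_idem, c1, c2, c3, card_top3, card_bot3, Matrix.cons_val_two, Matrix.cons_val_three,
        Matrix.cons_val_four, Matrix.tail_cons] <;>
      first
        | exact hA | exact hB | exact hB' | exact hC | exact hC' | exact hD | exact hCk
        | exact hE | exact hE' | exact hF
  rw [hMN]
  set N : Matrix (Fin 5) (Fin 5) ℝ :=
    !![2 * s, 2, 2, 2, s;
       2, 2 * s, s, s, 2;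
       2, s, 2 * s, s, 2;
       2, s, s, 2 * s, 2;
       s, 2, 2, 2, 2 * s] with hN
  -- Part 4: the kernel
  have hker : LinearMap.ker N.mulVecLin =
      Submodule.span ℝ {![s, -1, -1, -1, s]} := by
    apply le_antisymm
    · intro x hx
      rw [LinearMap.mem_ker, Matrix.mulVecLin_apply] at hx
      have h0 := congrFun hx 0
      have h1 := congrFun hx 1
      have h2 := congrFun hx 2
      have h3 := congrFun hx 3
      have h4 := congrFun hx 4
      simp [hN, Matrix.mulVec, dotProduct, Fin.sum_univ_five] at h0 h1 h2 h3 h4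
      have k1 : x 2 = x 1 := by
        have hm : s * (x 2 - x 1) = 0 := by linear_combination h2 - h1
        have := (mul_eq_zero.mp hm).resolve_left hs0'
        linarith
      have k2 : x 3 = x 1 := by
        have hm : s * (x 3 - x 1) = 0 := by linear_combination h3 - h1
        have := (mul_eq_zero.mp hm).resolve_left hs0'
        linarith
      have k3 : x 4 = x 0 := by
        have hm : s * (x 0 - x 4) = 0 := by linear_combination h0 - h4
        have := (mul_eq_zero.mp hm).resolve_left hs0'
        linarith
      have k4 : x 0 = -(s * x 1) := by
        linear_combination (1/4) * h1 - (s/4) * k1 - (s/4) * k2 - (1/2) * k3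
      rw [Submodule.mem_span_singleton]
      refine ⟨-(x 1), ?_⟩
      funext i
      fin_cases i <;>
        simp [Pi.smul_apply, smul_eq_mul] <;>
        first
          | ring1
          | linear_combination -k4
          | linear_combination -k1
          | linear_combination -k2
          | linear_combination -k4 - k3
          | linear_combination k4
          | linear_combination k1
          | linear_combination k2
          | linear_combination k4 + k3
    · rw [Submodule.span_le, Set.singleton_subset_iff, SetLike.mem_coe, LinearMap.mem_ker,
        Matrix.mulVecLin_apply]
      funext i
      fin_cases i <;>
        simp [hN, Matrix.mulVec, dotProduct, Fin.sum_univ_five] <;>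
        first
          | ring1
          | linear_combination 3 * hs2
          | linear_combination -3 * hs2
  -- Part 2: positive semidefiniteness
  have hherm : N.IsHermitian := by
    rw [Matrix.IsHermitian]
    funext i j
    fin_cases i <;> fin_cases j <;>
      simp [hN, Matrix.conjTranspose_apply]
  have hpsd : N.PosSemidef := by
    refine Matrix.PosSemidef.of_dotProduct_mulVec_nonneg hherm (fun x => ?_)
    have key : dotProduct (star x) (N.mulVec x) =
        (s/2) * (x 0 - x 4)^2 +
        (s/3) * ((x 1 - x 2)^2 + (x 1 - x 3)^2 + (x 2 - x 3)^2) +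
        (3*s/2) * (x 0 + x 4 + (2*s/3) * (x 1 + x 2 + x 3))^2 := by
      simp [hN, Matrix.mulVec, dotProduct, Fin.sum_univ_five]
      linear_combination (-2*(x 0 + x 4)*(x 1 + x 2 + x 3) - (2/3)*s*(x 1 + x 2 + x 3)^2) * hs2
    rw [key]
    have h1 : (0:ℝ) ≤ s/2 := by positivity
    have h2 : (0:ℝ) ≤ s/3 := by positivity
    have h3 : (0:ℝ) ≤ 3*s/2 := by positivity
    linarith [mul_nonneg h1 (sq_nonneg (x 0 - x 4)),
      mul_nonneg h2 (sq_nonneg (x 1 - x 2)), mul_nonneg h2 (sq_nonneg (x 1 - x 3)),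
      mul_nonneg h2 (sq_nonneg (x 2 - x 3)),
      mul_nonneg h3 (sq_nonneg (x 0 + x 4 + (2*s/3) * (x 1 + x 2 + x 3)))]
  -- Part 3: the rank
  have hrank : N.rank = 4 := by
    have hv : (![s, -1, -1, -1, s] : Fin 5 → ℝ) ≠ 0 := by
      intro h
      have := congrFun h 1
      norm_num at this
    have hkd : Module.finrank ℝ (LinearMap.ker N.mulVecLin) = 1 := by
      rw [hker]
      exact finrank_span_singleton hv
    have hrn := LinearMap.finrank_range_add_finrank_ker N.mulVecLin
    rw [hkd] at hrn
    simp [Module.finrank_pi] at hrn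
    rw [Matrix.rank]
    omega
  exact ⟨rfl, hpsd, hrank, hker⟩
end
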